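/- The coalition number of the cycle C_n satisfies: C(C_n) = n for 3 ≤ n ≤ 6, C(C_7) = 5, and C(C_n) = 6 for n ≥ 8. -/

import Mathlib

open SimpleGraph

attribute [local instance] Classical.propDecidable

def Dominates {V : Type*} (G : SimpleGraph V) (S : Set V) : Prop :=
  ∀ v, v ∉ S → ∃ u ∈ S, G.Adj u v

def Coalition {V : Type*} (G : SimpleGraph V) (A B : Set V) : Prop :=
  Disjoint A B ∧ ¬ Dominates G A ∧ ¬ Dominates G B ∧ Dominates G (A ∪ B)

def IsCoalitionPartition {V : Type*} (G : SimpleGraph V) (P : Finset (Set V)) : Prop :=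
  (∀ A ∈ P, A.Nonempty) ∧
  (∀ A ∈ P, ∀ B ∈ P, A ≠ B → Disjoint A B) ∧
  (∀ v : V, ∃ A ∈ P, v ∈ A) ∧
  (∀ A ∈ P, (Dominates G A ∧ ∃ v, A = {v}) ∨
    (¬ Dominates G A ∧ ∃ B ∈ P, B ≠ A ∧ Coalition G A B))

noncomputable def coalitionNumber {V : Type*} (G : SimpleGraph V) : ℕ :=
  sSup {n | ∃ P : Finset (Set V), IsCoalitionPartition G P ∧ P.card = n}

def coalitionGraph {V : Type*} (G : SimpleGraph V) (P : Finset (Set V)) :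
    SimpleGraph {A : Set V // A ∈ P} where
  Adj A B := Coalition G A.1 B.1
  symm := by
    constructor
    rintro A B ⟨d, na, nb, u⟩
    exact ⟨d.symm, nb, na, by rwa [Set.union_comm]⟩
  loopless := by
    constructor
    rintro ⟨A, hA⟩ ⟨d, na, nb, u⟩
    rw [Set.union_self] at u
    exact na u

section Infra
variable {m : ℕ}

lemma cyc_adj_iff {u v : Fin (m + 3)} :
    (cycleGraph (m + 3)).Adj u v ↔ u = v + 1 ∨ u = v - 1 := by
  have h : (cycleGraph (m + 3)).Adj u v ↔ u - v = 1 ∨ v - u = 1 := @cycleGraph_adj (m + 1) u v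
  rw [h]
  constructor
  · rintro (h | h)
    · left; rw [sub_eq_iff_eq_add] at h; rw [h]; exact add_comm 1 v
    · right; rw [sub_eq_iff_eq_add] at h
      rw [h]; rw [add_sub_cancel_left]
  · rintro (rfl | rfl)
    · left; rw [add_sub_cancel_left]
    · right; rw [sub_sub_cancel]

def Covers (S : Set (Fin (m + 3))) : Prop :=
  ∀ v : Fin (m + 3), v ∈ S ∨ v + 1 ∈ S ∨ v - 1 ∈ S

lemma dominates_iff {S : Set (Fin (m + 3))} :
    Dominates (cycleGraph (m + 3)) S ↔ Covers S := by
  constructor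
  · intro hd v
    by_cases hv : v ∈ S
    · exact Or.inl hv
    · obtain ⟨u, hu, hadj⟩ := hd v hv
      rcases cyc_adj_iff.mp hadj with rfl | rfl
      · exact Or.inr (Or.inl hu)
      · exact Or.inr (Or.inr hu)
  · intro hc v hv
    rcases hc v with h | h | h
    · exact absurd h hv
    · exact ⟨v + 1, h, cyc_adj_iff.mpr (Or.inl rfl)⟩
    · exact ⟨v - 1, h, cyc_adj_iff.mpr (Or.inr rfl)⟩

lemma dom_card {S : Set (Fin (m + 3))} (hd : Dominates (cycleGraph (m + 3)) S) :
    m + 3 ≤ 3 * S.toFinset.card := by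
  have hc := dominates_iff.mp hd
  have hsub : (Finset.univ : Finset (Fin (m + 3))) ⊆
      S.toFinset.biUnion (fun s => ({s - 1, s, s + 1} : Finset (Fin (m + 3)))) := by
    intro v _
    rw [Finset.mem_biUnion]
    rcases hc v with h | h | h
    · exact ⟨v, Set.mem_toFinset.mpr h, by simp⟩
    · exact ⟨v + 1, Set.mem_toFinset.mpr h, by simp [add_sub_cancel_right]⟩
    · exact ⟨v - 1, Set.mem_toFinset.mpr h, by simp [sub_add_cancel]⟩
  calc m + 3 = (Finset.univ : Finset (Fin (m + 3))).card := by simp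
  _ ≤ _ := Finset.card_le_card hsub
  _ ≤ ∑ s ∈ S.toFinset, ({s - 1, s, s + 1} : Finset (Fin (m + 3))).card :=
      Finset.card_biUnion_le
  _ ≤ ∑ _s ∈ S.toFinset, 3 := Finset.sum_le_sum (fun s _ => by
      apply le_trans (Finset.card_insert_le _ _)
      apply Nat.succ_le_succ
      apply le_trans (Finset.card_insert_le _ _)
      simp)
  _ = 3 * S.toFinset.card := by rw [Finset.sum_const]; ring

end Infra

section Infra2
variable {m : ℕ}

set_option maxHeartbeats 2000000 in
lemma three_cover {D1 D2 D3 : Set (Fin (m + 3))}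
    (h1 : Dominates (cycleGraph (m + 3)) D1) (h2 : Dominates (cycleGraph (m + 3)) D2)
    (h3 : Dominates (cycleGraph (m + 3)) D3)
    (d12 : Disjoint D1 D2) (d13 : Disjoint D1 D3) (d23 : Disjoint D2 D3) :
    ∀ v : Fin (m + 3), v ∈ D1 ∨ v ∈ D2 ∨ v ∈ D3 := by
  have c1 := dom_card h1; have c2 := dom_card h2; have c3 := dom_card h3
  have hd12 : Disjoint D1.toFinset D2.toFinset := by rwa [Set.disjoint_toFinset]
  have hd13 : Disjoint D1.toFinset D3.toFinset := by rwa [Set.disjoint_toFinset]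
  have hd23 : Disjoint D2.toFinset D3.toFinset := by rwa [Set.disjoint_toFinset]
  have hu : (D1.toFinset ∪ D2.toFinset ∪ D3.toFinset).card
      = D1.toFinset.card + D2.toFinset.card + D3.toFinset.card := by
    rw [Finset.card_union_of_disjoint, Finset.card_union_of_disjoint hd12]
    rw [Finset.disjoint_union_left]
    exact ⟨hd13, hd23⟩
  have hle : (D1.toFinset ∪ D2.toFinset ∪ D3.toFinset).card ≤ m + 3 := by
    have := Finset.card_le_univ (D1.toFinset ∪ D2.toFinset ∪ D3.toFinset)
    simpa using this
  have huniv : (D1.toFinset ∪ D2.toFinset ∪ D3.toFinset) = Finset.univ := by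
    apply Finset.eq_univ_of_card
    simp only [Fintype.card_fin]
    omega
  intro v
  have hv : v ∈ D1.toFinset ∪ D2.toFinset ∪ D3.toFinset := huniv ▸ Finset.mem_univ v
  simp only [Finset.mem_union, Set.mem_toFinset] at hv
  tauto

lemma four_disjoint {S1 S2 S3 S4 : Set (Fin (m + 3))} {v : Fin (m + 3)}
    (m1 : v ∈ S1 ∨ v + 1 ∈ S1 ∨ v - 1 ∈ S1)
    (m2 : v ∈ S2 ∨ v + 1 ∈ S2 ∨ v - 1 ∈ S2)
    (m3 : v ∈ S3 ∨ v + 1 ∈ S3 ∨ v - 1 ∈ S3)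
    (m4 : v ∈ S4 ∨ v + 1 ∈ S4 ∨ v - 1 ∈ S4)
    (d12 : Disjoint S1 S2) (d13 : Disjoint S1 S3) (d14 : Disjoint S1 S4)
    (d23 : Disjoint S2 S3) (d24 : Disjoint S2 S4) (d34 : Disjoint S3 S4) : False := by
  obtain ⟨w1, hw1, hm1⟩ : ∃ w, w ∈ S1 ∧ w ∈ ({v, v + 1, v - 1} : Finset (Fin (m+3))) := by
    rcases m1 with h | h | h
    exacts [⟨v, h, by simp⟩, ⟨v+1, h, by simp⟩, ⟨v-1, h, by simp⟩]
  obtain ⟨w2, hw2, hm2⟩ : ∃ w, w ∈ S2 ∧ w ∈ ({v, v + 1, v - 1} : Finset (Fin (m+3))) := by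
    rcases m2 with h | h | h
    exacts [⟨v, h, by simp⟩, ⟨v+1, h, by simp⟩, ⟨v-1, h, by simp⟩]
  obtain ⟨w3, hw3, hm3⟩ : ∃ w, w ∈ S3 ∧ w ∈ ({v, v + 1, v - 1} : Finset (Fin (m+3))) := by
    rcases m3 with h | h | h
    exacts [⟨v, h, by simp⟩, ⟨v+1, h, by simp⟩, ⟨v-1, h, by simp⟩]
  obtain ⟨w4, hw4, hm4⟩ : ∃ w, w ∈ S4 ∧ w ∈ ({v, v + 1, v - 1} : Finset (Fin (m+3))) := by
    rcases m4 with h | h | h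
    exacts [⟨v, h, by simp⟩, ⟨v+1, h, by simp⟩, ⟨v-1, h, by simp⟩]
  have n12 : w1 ≠ w2 := fun h => Set.disjoint_left.mp d12 hw1 (h ▸ hw2)
  have n13 : w1 ≠ w3 := fun h => Set.disjoint_left.mp d13 hw1 (h ▸ hw3)
  have n14 : w1 ≠ w4 := fun h => Set.disjoint_left.mp d14 hw1 (h ▸ hw4)
  have n23 : w2 ≠ w3 := fun h => Set.disjoint_left.mp d23 hw2 (h ▸ hw3)
  have n24 : w2 ≠ w4 := fun h => Set.disjoint_left.mp d24 hw2 (h ▸ hw4)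
  have n34 : w3 ≠ w4 := fun h => Set.disjoint_left.mp d34 hw3 (h ▸ hw4)
  have hsub : ({w1, w2, w3, w4} : Finset (Fin (m+3))) ⊆ {v, v + 1, v - 1} := by
    intro x hx
    simp only [Finset.mem_insert, Finset.mem_singleton] at hx
    rcases hx with rfl | rfl | rfl | rfl <;> assumption
  have hcard4 : ({w1, w2, w3, w4} : Finset (Fin (m+3))).card = 4 := by
    rw [Finset.card_insert_of_notMem (by simp [n12, n13, n14]),
        Finset.card_insert_of_notMem (by simp [n23, n24]),
        Finset.card_insert_of_notMem (by simp [n34]),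
        Finset.card_singleton]
  have h3 : ({v, v + 1, v - 1} : Finset (Fin (m+3))).card ≤ 3 := by
    apply le_trans (Finset.card_insert_le _ _)
    apply Nat.succ_le_succ
    apply le_trans (Finset.card_insert_le _ _)
    simp
  have := Finset.card_le_card hsub
  omega

end Infra2

section Part
variable {V : Type*} [Fintype V] [DecidableEq V]

lemma partition_sum (P : Finset (Set V))
    (hne : ∀ A ∈ P, A.Nonempty)
    (hdisj : ∀ A ∈ P, ∀ B ∈ P, A ≠ B → Disjoint A B)
    (hcov : ∀ v : V, ∃ A ∈ P, v ∈ A) :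
    ∑ A ∈ P, A.toFinset.card = Fintype.card V ∧ P.card ≤ Fintype.card V := by
  have hbu : (P.biUnion (fun A => A.toFinset)) = Finset.univ := by
    apply Finset.eq_univ_of_forall
    intro v
    obtain ⟨A, hA, hv⟩ := hcov v
    exact Finset.mem_biUnion.mpr ⟨A, hA, Set.mem_toFinset.mpr hv⟩
  have hsum : ∑ A ∈ P, A.toFinset.card = Fintype.card V := by
    rw [← Finset.card_biUnion, hbu, Finset.card_univ]
    intro A hA B hB hAB
    rw [Function.onFun, Set.disjoint_toFinset]
    exact hdisj A hA B hB hAB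
  refine ⟨hsum, ?_⟩
  calc P.card = ∑ _A ∈ P, 1 := by simp
  _ ≤ ∑ A ∈ P, A.toFinset.card := Finset.sum_le_sum (fun A hA => by
      obtain ⟨x, hx⟩ := hne A hA
      exact Finset.card_pos.mpr ⟨x, Set.mem_toFinset.mpr hx⟩)
  _ = Fintype.card V := hsum

end Part


set_option maxHeartbeats 2000000 in
theorem card_le_six {m : ℕ} (hm : 1 ≤ m) (P : Finset (Set (Fin (m + 3))))
    (hP : IsCoalitionPartition (cycleGraph (m + 3)) P) : P.card ≤ 6 := by
  set G := cycleGraph (m + 3) with hG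
  obtain ⟨hne, hdisj, hcov, hcoal⟩ := hP
  by_contra hk
  push_neg at hk
  -- no part dominates
  have hnd : ∀ A ∈ P, ¬ Dominates G A := by
    intro A hA hdom
    rcases hcoal A hA with ⟨_, v, rfl⟩ | ⟨hnd', _⟩
    · have := dom_card hdom
      simp only [Set.toFinset_singleton, Finset.card_singleton] at this
      omega
    · exact hnd' hdom
  have hpartner : ∀ A ∈ P, ∃ B ∈ P, B ≠ A ∧ Dominates G (A ∪ B) := by
    intro A hA
    rcases hcoal A hA with ⟨hd, _⟩ | ⟨_, B, hB, hBA, hco⟩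
    · exact absurd hd (hnd A hA)
    · exact ⟨B, hB, hBA, hco.2.2.2⟩
  have hfree : ∀ A ∈ P, ∃ v : Fin (m+3), v ∉ A ∧ v + 1 ∉ A ∧ v - 1 ∉ A := by
    intro A hA
    have h := hnd A hA
    rw [dominates_iff] at h
    obtain ⟨v, hv⟩ := not_forall.mp h
    push_neg at hv
    exact ⟨v, hv.1, hv.2.1, hv.2.2⟩
  have hmeets : ∀ {D : Set (Fin (m+3))}, Dominates G D →
      ∀ v : Fin (m+3), (v ∈ D ∨ v + 1 ∈ D ∨ v - 1 ∈ D) :=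
    fun hD v => (dominates_iff.mp hD) v
  have hfree_meets : ∀ {A B : Set (Fin (m+3))} {v : Fin (m+3)}, Dominates G (A ∪ B) →
      v ∉ A → v + 1 ∉ A → v - 1 ∉ A → (v ∈ B ∨ v + 1 ∈ B ∨ v - 1 ∈ B) := by
    intro A B v hD h1 h2 h3
    rcases hmeets hD v with h | h | h <;> rw [Set.mem_union] at h <;> tauto
  -- hub lemma 1 : three outside partners of a hub impossible
  have hub1 : ∀ a b X1 X2 X3 : Set (Fin (m+3)), a ∈ P → b ∈ P → X1 ∈ P → X2 ∈ P → X3 ∈ P →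
      b ≠ a → X1 ≠ X2 → X1 ≠ X3 → X2 ≠ X3 → X1 ≠ b → X2 ≠ b → X3 ≠ b →
      Dominates G (a ∪ b) → Dominates G (X1 ∪ a) → Dominates G (X2 ∪ a) →
      Dominates G (X3 ∪ a) → False := by
    intro a b X1 X2 X3 ha hb h1 h2 h3 nba n12 n13 n23 n1b n2b n3b dab d1 d2 d3
    obtain ⟨v, hv1, hv2, hv3⟩ := hfree a ha
    exact four_disjoint
      (hfree_meets (by rwa [Set.union_comm] at d1) hv1 hv2 hv3)
      (hfree_meets (by rwa [Set.union_comm] at d2) hv1 hv2 hv3)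
      (hfree_meets (by rwa [Set.union_comm] at d3) hv1 hv2 hv3)
      (hfree_meets dab hv1 hv2 hv3)
      (hdisj X1 h1 X2 h2 n12) (hdisj X1 h1 X3 h3 n13) (hdisj X1 h1 b hb n1b)
      (hdisj X2 h2 X3 h3 n23) (hdisj X2 h2 b hb n2b) (hdisj X3 h3 b hb n3b)
  -- hub lemma 2 : two outside partners of a hub impossible, when another pair exists
  have hub2 : ∀ a b c d X1 X2 : Set (Fin (m+3)), a ∈ P → b ∈ P → c ∈ P → d ∈ P →
      X1 ∈ P → X2 ∈ P → b ≠ a → c ≠ d → X1 ≠ X2 → X1 ≠ b → X2 ≠ b →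
      X1 ≠ c → X1 ≠ d → X2 ≠ c → X2 ≠ d → b ≠ c → b ≠ d →
      Dominates G (a ∪ b) → Dominates G (c ∪ d) → Dominates G (X1 ∪ a) →
      Dominates G (X2 ∪ a) → False := by
    intro a b c d X1 X2 ha hb hc hd h1 h2 nba ncd n12 n1b n2b n1c n1d n2c n2d nbc nbd dab dcd d1 d2
    obtain ⟨v, hv1, hv2, hv3⟩ := hfree a ha
    exact four_disjoint (S4 := c ∪ d)
      (hfree_meets (by rwa [Set.union_comm] at d1) hv1 hv2 hv3)
      (hfree_meets (by rwa [Set.union_comm] at d2) hv1 hv2 hv3)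
      (hfree_meets dab hv1 hv2 hv3)
      (hmeets dcd v)
      (hdisj X1 h1 X2 h2 n12) (hdisj X1 h1 b hb n1b)
      (Set.disjoint_union_right.mpr ⟨hdisj X1 h1 c hc n1c, hdisj X1 h1 d hd n1d⟩)
      (hdisj X2 h2 b hb n2b)
      (Set.disjoint_union_right.mpr ⟨hdisj X2 h2 c hc n2c, hdisj X2 h2 d hd n2d⟩)
      (Set.disjoint_union_right.mpr ⟨hdisj b hb c hc nbc, hdisj b hb d hd nbd⟩)
  -- the finisher : three disjoint dominating unions plus a seventh part
  have final : ∀ a b c d Xa Xb Xc : Set (Fin (m+3)), a ∈ P → b ∈ P → c ∈ P → d ∈ P →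
      Xa ∈ P → Xb ∈ P → Xc ∈ P →
      a ≠ b → a ≠ c → a ≠ d → b ≠ c → b ≠ d → c ≠ d →
      Xa ≠ Xb → Xa ≠ Xc → Xb ≠ Xc →
      Xa ≠ a → Xa ≠ b → Xa ≠ c → Xa ≠ d →
      Xb ≠ a → Xb ≠ b → Xb ≠ c → Xb ≠ d →
      Xc ≠ a → Xc ≠ b → Xc ≠ c → Xc ≠ d →
      Dominates G (c ∪ d) → Dominates G (Xa ∪ a) → Dominates G (Xb ∪ b) → False := by
    intro a b c d Xa Xb Xc ha hb hc hd hXa hXb hXc nab nac nad nbc nbd ncd nXaXb nXaXc nXbXc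
      nXaa nXab nXac nXad nXba nXbb nXbc nXbd nXca nXcb nXcc nXcd dcd dXaa dXbb
    have cover := three_cover (D1 := Xa ∪ a) (D2 := Xb ∪ b) (D3 := c ∪ d) dXaa dXbb dcd
      (by rw [Set.disjoint_union_left]
          constructor <;> rw [Set.disjoint_union_right]
          · exact ⟨hdisj Xa hXa Xb hXb nXaXb, hdisj Xa hXa b hb nXab⟩
          · exact ⟨hdisj a ha Xb hXb (Ne.symm nXba), hdisj a ha b hb nab⟩)
      (by rw [Set.disjoint_union_left]
          constructor <;> rw [Set.disjoint_union_right]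
          · exact ⟨hdisj Xa hXa c hc nXac, hdisj Xa hXa d hd nXad⟩
          · exact ⟨hdisj a ha c hc nac, hdisj a ha d hd nad⟩)
      (by rw [Set.disjoint_union_left]
          constructor <;> rw [Set.disjoint_union_right]
          · exact ⟨hdisj Xb hXb c hc nXbc, hdisj Xb hXb d hd nXbd⟩
          · exact ⟨hdisj b hb c hc nbc, hdisj b hb d hd nbd⟩)
    obtain ⟨x, hx⟩ := hne Xc hXc
    rcases cover x with h | h | h <;> rw [Set.mem_union] at h <;> rcases h with h | h
    · exact Set.disjoint_left.mp (hdisj Xc hXc Xa hXa (fun e => nXaXc e.symm)) hx h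
    · exact Set.disjoint_left.mp (hdisj Xc hXc a ha nXca) hx h
    · exact Set.disjoint_left.mp (hdisj Xc hXc Xb hXb (fun e => nXbXc e.symm)) hx h
    · exact Set.disjoint_left.mp (hdisj Xc hXc b hb nXcb) hx h
    · exact Set.disjoint_left.mp (hdisj Xc hXc c hc nXcc) hx h
    · exact Set.disjoint_left.mp (hdisj Xc hXc d hd nXcd) hx h
  -- start
  obtain ⟨A1, hA1⟩ := Finset.card_pos.mp (by omega : 0 < P.card)
  obtain ⟨B1, hB1, hB1ne, hDom1⟩ := hpartner A1 hA1
  by_cases hex2 : ∃ A2 ∈ P, ∃ B2 ∈ P, B2 ≠ A2 ∧ Dominates G (A2 ∪ B2) ∧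
      A2 ≠ A1 ∧ A2 ≠ B1 ∧ B2 ≠ A1 ∧ B2 ≠ B1
  · obtain ⟨A2, hA2, B2, hB2, hB2ne, hDom2, n2a, n2b, n2c, n2d⟩ := hex2
    by_cases hex3 : ∃ A3 ∈ P, ∃ B3 ∈ P, B3 ≠ A3 ∧ Dominates G (A3 ∪ B3) ∧
        A3 ≠ A1 ∧ A3 ≠ B1 ∧ A3 ≠ A2 ∧ A3 ≠ B2 ∧ B3 ≠ A1 ∧ B3 ≠ B1 ∧ B3 ≠ A2 ∧ B3 ≠ B2
    · obtain ⟨A3, hA3, B3, hB3, hB3ne, hDom3, m1, m2, m3, m4, m5, m6, m7, m8⟩ := hex3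
      have cover := three_cover (D1 := A1 ∪ B1) (D2 := A2 ∪ B2) (D3 := A3 ∪ B3)
        hDom1 hDom2 hDom3
        (by rw [Set.disjoint_union_left]
            constructor <;> rw [Set.disjoint_union_right]
            · exact ⟨hdisj A1 hA1 A2 hA2 (fun e => n2a e.symm), hdisj A1 hA1 B2 hB2 (fun e => n2c e.symm)⟩
            · exact ⟨hdisj B1 hB1 A2 hA2 (fun e => n2b e.symm), hdisj B1 hB1 B2 hB2 (fun e => n2d e.symm)⟩)
        (by rw [Set.disjoint_union_left]
            constructor <;> rw [Set.disjoint_union_right]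
            · exact ⟨hdisj A1 hA1 A3 hA3 (fun e => m1 e.symm), hdisj A1 hA1 B3 hB3 (fun e => m5 e.symm)⟩
            · exact ⟨hdisj B1 hB1 A3 hA3 (fun e => m2 e.symm), hdisj B1 hB1 B3 hB3 (fun e => m6 e.symm)⟩)
        (by rw [Set.disjoint_union_left]
            constructor <;> rw [Set.disjoint_union_right]
            · exact ⟨hdisj A2 hA2 A3 hA3 (fun e => m3 e.symm), hdisj A2 hA2 B3 hB3 (fun e => m7 e.symm)⟩
            · exact ⟨hdisj B2 hB2 A3 hA3 (fun e => m4 e.symm), hdisj B2 hB2 B3 hB3 (fun e => m8 e.symm)⟩)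
      have hnotsub : ¬ P ⊆ ({A1, B1, A2, B2, A3, B3} : Finset (Set (Fin (m+3)))) := by
        intro hsub
        have := Finset.card_le_card hsub
        have h6 : ({A1, B1, A2, B2, A3, B3} : Finset (Set (Fin (m+3)))).card ≤ 6 := by
          apply le_trans (Finset.card_insert_le _ _); apply Nat.succ_le_succ
          apply le_trans (Finset.card_insert_le _ _); apply Nat.succ_le_succ
          apply le_trans (Finset.card_insert_le _ _); apply Nat.succ_le_succ
          apply le_trans (Finset.card_insert_le _ _); apply Nat.succ_le_succ
          apply le_trans (Finset.card_insert_le _ _); apply Nat.succ_le_succ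
          simp
        omega
      obtain ⟨X, hXP, hXnot⟩ := Finset.not_subset.mp hnotsub
      simp only [Finset.mem_insert, Finset.mem_singleton, not_or] at hXnot
      obtain ⟨e1, e2, e3, e4, e5, e6⟩ := hXnot
      obtain ⟨x, hx⟩ := hne X hXP
      rcases cover x with h | h | h <;> rw [Set.mem_union] at h <;> rcases h with h | h
      · exact Set.disjoint_left.mp (hdisj X hXP A1 hA1 e1) hx h
      · exact Set.disjoint_left.mp (hdisj X hXP B1 hB1 e2) hx h
      · exact Set.disjoint_left.mp (hdisj X hXP A2 hA2 e3) hx h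
      · exact Set.disjoint_left.mp (hdisj X hXP B2 hB2 e4) hx h
      · exact Set.disjoint_left.mp (hdisj X hXP A3 hA3 e5) hx h
      · exact Set.disjoint_left.mp (hdisj X hXP B3 hB3 e6) hx h
    · -- no third pair : all pairs meet {A1,B1,A2,B2}
      set W : Finset (Set (Fin (m+3))) := {A1, B1, A2, B2} with hW
      set P' := P \ W with hP'
      have hP'card : 3 ≤ P'.card := by
        have h1 := Finset.card_le_card_sdiff_add_card (s := P) (t := W)
        rw [← hP'] at h1
        have h2 : W.card ≤ 4 := by
          apply le_trans (Finset.card_insert_le _ _); apply Nat.succ_le_succ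
          apply le_trans (Finset.card_insert_le _ _); apply Nat.succ_le_succ
          apply le_trans (Finset.card_insert_le _ _); apply Nat.succ_le_succ
          simp
        omega
      have hmemP' : ∀ X ∈ P', X ∈ P ∧ X ≠ A1 ∧ X ≠ B1 ∧ X ≠ A2 ∧ X ≠ B2 := by
        intro X hX
        rw [hP', Finset.mem_sdiff, hW] at hX
        simp only [Finset.mem_insert, Finset.mem_singleton, not_or] at hX
        tauto
      have hchoice : ∀ X ∈ P', ∃ w, (w = A1 ∨ w = B1 ∨ w = A2 ∨ w = B2) ∧
          Dominates G (X ∪ w) := by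
        intro X hX
        obtain ⟨hXP, ne1, ne2, ne3, ne4⟩ := hmemP' X hX
        obtain ⟨Y, hY, hYne, hYdom⟩ := hpartner X hXP
        by_cases hw1 : Y = A1; · exact ⟨Y, Or.inl hw1, hYdom⟩
        by_cases hw2 : Y = B1; · exact ⟨Y, Or.inr (Or.inl hw2), hYdom⟩
        by_cases hw3 : Y = A2; · exact ⟨Y, Or.inr (Or.inr (Or.inl hw3)), hYdom⟩
        by_cases hw4 : Y = B2; · exact ⟨Y, Or.inr (Or.inr (Or.inr hw4)), hYdom⟩
        exfalso
        exact hex3 ⟨X, hXP, Y, hY, hYne, hYdom, ne1, ne2, ne3, ne4, hw1, hw2, hw3, hw4⟩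
      obtain ⟨X1, hX1, X2, hX2, X3, hX3, q12, q13, q23⟩ :=
        Finset.two_lt_card.mp (by omega : 2 < P'.card)
      obtain ⟨hX1P, r11, r12, r13, r14⟩ := hmemP' X1 hX1
      obtain ⟨hX2P, r21, r22, r23, r24⟩ := hmemP' X2 hX2
      obtain ⟨hX3P, r31, r32, r33, r34⟩ := hmemP' X3 hX3
      obtain ⟨w1, hw1opt, hw1dom⟩ := hchoice X1 hX1
      obtain ⟨w2, hw2opt, hw2dom⟩ := hchoice X2 hX2
      obtain ⟨w3, hw3opt, hw3dom⟩ := hchoice X3 hX3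
      have n12 : A1 ≠ B1 := fun e => hB1ne e.symm
      have n34 : A2 ≠ B2 := fun e => hB2ne e.symm
      -- hub uniqueness
      have hubU : ∀ w Y1 Y2, (w = A1 ∨ w = B1 ∨ w = A2 ∨ w = B2) → Y1 ∈ P' → Y2 ∈ P' →
          Y1 ≠ Y2 → Dominates G (Y1 ∪ w) → Dominates G (Y2 ∪ w) → False := by
        intro w Y1 Y2 hw hY1 hY2 e dd1 dd2
        obtain ⟨p1, a1, b1, c1, dd1'⟩ := hmemP' Y1 hY1
        obtain ⟨p2, a2, b2, c2, dd2'⟩ := hmemP' Y2 hY2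
        rcases hw with rfl | rfl | rfl | rfl
        · exact hub2 w B1 A2 B2 Y1 Y2 hA1 hB1 hA2 hB2 p1 p2 hB1ne n34 e b1 b2 c1 dd1' c2 dd2'
            (fun h => n2b h.symm) (fun h => n2d h.symm) hDom1 hDom2 dd1 dd2
        · exact hub2 w A1 A2 B2 Y1 Y2 hB1 hA1 hA2 hB2 p1 p2 n12 n34 e a1 a2 c1 dd1' c2 dd2'
            (fun h => n2a h.symm) (fun h => n2c h.symm)
            (by rwa [Set.union_comm] at hDom1) hDom2 dd1 dd2
        · exact hub2 w B2 A1 B1 Y1 Y2 hA2 hB2 hA1 hB1 p1 p2 hB2ne n12 e dd1' dd2' a1 b1 a2 b2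
            n2c n2d hDom2 hDom1 dd1 dd2
        · exact hub2 w A2 A1 B1 Y1 Y2 hB2 hA2 hA1 hB1 p1 p2 n34 n12 e c1 c2 a1 b1 a2 b2
            n2a n2b (by rwa [Set.union_comm] at hDom2) hDom1 dd1 dd2
      have nw12 : w1 ≠ w2 := by
        intro e; subst e; exact hubU w1 X1 X2 hw1opt hX1 hX2 q12 hw1dom hw2dom
      have nw13 : w1 ≠ w3 := by
        intro e; subst e; exact hubU w1 X1 X3 hw1opt hX1 hX3 q13 hw1dom hw3dom
      have nw23 : w2 ≠ w3 := by
        intro e; subst e; exact hubU w2 X2 X3 hw2opt hX2 hX3 q23 hw2dom hw3dom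
      have fin1 : ∀ Xa Xb Xc, Xa ∈ P' → Xb ∈ P' → Xc ∈ P' → Xa ≠ Xb → Xa ≠ Xc → Xb ≠ Xc →
          Dominates G (Xa ∪ A1) → Dominates G (Xb ∪ B1) → False := by
        intro Xa Xb Xc ha' hb' hc' nab' nac' nbc' da db
        obtain ⟨pa, a1, a2, a3, a4⟩ := hmemP' Xa ha'
        obtain ⟨pb, b1, b2, b3, b4⟩ := hmemP' Xb hb'
        obtain ⟨pc, c1, c2, c3, c4⟩ := hmemP' Xc hc'
        exact final A1 B1 A2 B2 Xa Xb Xc hA1 hB1 hA2 hB2 pa pb pc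
          n12 (fun e => n2a e.symm) (fun e => n2c e.symm) (fun e => n2b e.symm)
          (fun e => n2d e.symm) n34 nab' nac' nbc'
          a1 a2 a3 a4 b1 b2 b3 b4 c1 c2 c3 c4 hDom2 da db
      have fin2 : ∀ Xa Xb Xc, Xa ∈ P' → Xb ∈ P' → Xc ∈ P' → Xa ≠ Xb → Xa ≠ Xc → Xb ≠ Xc →
          Dominates G (Xa ∪ A2) → Dominates G (Xb ∪ B2) → False := by
        intro Xa Xb Xc ha' hb' hc' nab' nac' nbc' da db
        obtain ⟨pa, a1, a2, a3, a4⟩ := hmemP' Xa ha'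
        obtain ⟨pb, b1, b2, b3, b4⟩ := hmemP' Xb hb'
        obtain ⟨pc, c1, c2, c3, c4⟩ := hmemP' Xc hc'
        exact final A2 B2 A1 B1 Xa Xb Xc hA2 hB2 hA1 hB1 pa pb pc
          n34 n2a n2b n2c n2d n12 nab' nac' nbc'
          a3 a4 a1 a2 b3 b4 b1 b2 c3 c4 c1 c2 hDom1 da db
      rcases hw1opt with rfl | rfl | rfl | rfl <;> rcases hw2opt with rfl | rfl | rfl | rfl <;>
        rcases hw3opt with rfl | rfl | rfl | rfl <;>
        first
        | exact nw12 rfl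
        | exact nw13 rfl
        | exact nw23 rfl
        | exact fin1 X1 X2 X3 hX1 hX2 hX3 q12 q13 q23 hw1dom hw2dom
        | exact fin1 X1 X3 X2 hX1 hX3 hX2 q13 q12 (Ne.symm q23) hw1dom hw3dom
        | exact fin1 X2 X1 X3 hX2 hX1 hX3 (Ne.symm q12) q23 q13 hw2dom hw1dom
        | exact fin1 X2 X3 X1 hX2 hX3 hX1 q23 (Ne.symm q12) (Ne.symm q13) hw2dom hw3dom
        | exact fin1 X3 X1 X2 hX3 hX1 hX2 (Ne.symm q13) (Ne.symm q23) q12 hw3dom hw1dom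
        | exact fin1 X3 X2 X1 hX3 hX2 hX1 (Ne.symm q23) (Ne.symm q13) (Ne.symm q12) hw3dom hw2dom
        | exact fin2 X1 X2 X3 hX1 hX2 hX3 q12 q13 q23 hw1dom hw2dom
        | exact fin2 X1 X3 X2 hX1 hX3 hX2 q13 q12 (Ne.symm q23) hw1dom hw3dom
        | exact fin2 X2 X1 X3 hX2 hX1 hX3 (Ne.symm q12) q23 q13 hw2dom hw1dom
        | exact fin2 X2 X3 X1 hX2 hX3 hX1 q23 (Ne.symm q12) (Ne.symm q13) hw2dom hw3dom
        | exact fin2 X3 X1 X2 hX3 hX1 hX2 (Ne.symm q13) (Ne.symm q23) q12 hw3dom hw1dom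
        | exact fin2 X3 X2 X1 hX3 hX2 hX1 (Ne.symm q23) (Ne.symm q13) (Ne.symm q12) hw3dom hw2dom
  · -- no second pair : every other part partners A1 or B1
    set P' := P \ ({A1, B1} : Finset (Set (Fin (m+3)))) with hP'
    have hP'card : 5 ≤ P'.card := by
      have h1 := Finset.card_le_card_sdiff_add_card (s := P) (t := ({A1, B1} : Finset (Set (Fin (m+3)))))
      rw [← hP'] at h1
      have h2 : ({A1, B1} : Finset (Set (Fin (m+3)))).card ≤ 2 := by
        apply le_trans (Finset.card_insert_le _ _); apply Nat.succ_le_succ; simp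
      omega
    have hmemP' : ∀ X ∈ P', X ∈ P ∧ X ≠ A1 ∧ X ≠ B1 := by
      intro X hX
      rw [hP', Finset.mem_sdiff] at hX
      simp only [Finset.mem_insert, Finset.mem_singleton, not_or] at hX
      tauto
    have hhub : ∀ X ∈ P', Dominates G (X ∪ A1) ∨ Dominates G (X ∪ B1) := by
      intro X hX
      obtain ⟨hXP, ne1, ne2⟩ := hmemP' X hX
      obtain ⟨Y, hY, hYne, hYdom⟩ := hpartner X hXP
      by_cases hYA : Y = A1
      · left; rwa [hYA] at hYdom
      by_cases hYB : Y = B1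
      · right; rwa [hYB] at hYdom
      · exfalso; exact hex2 ⟨X, hXP, Y, hY, hYne, hYdom, ne1, ne2, hYA, hYB⟩
    have hsplit : P' ⊆ (P'.filter (fun X => Dominates G (X ∪ A1))) ∪
        (P'.filter (fun X => Dominates G (X ∪ B1))) := by
      intro X hX
      rw [Finset.mem_union, Finset.mem_filter, Finset.mem_filter]
      rcases hhub X hX with h | h
      · exact Or.inl ⟨hX, h⟩
      · exact Or.inr ⟨hX, h⟩
    have hcard1 : (P'.filter (fun X => Dominates G (X ∪ A1))).card ≤ 2 := by
      by_contra hgt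
      push_neg at hgt
      obtain ⟨Y1, hY1, Y2, hY2, Y3, hY3, s12, s13, s23⟩ := Finset.two_lt_card.mp hgt
      rw [Finset.mem_filter] at hY1 hY2 hY3
      obtain ⟨t1, u1, v1⟩ := hmemP' Y1 hY1.1
      obtain ⟨t2, u2, v2⟩ := hmemP' Y2 hY2.1
      obtain ⟨t3, u3, v3⟩ := hmemP' Y3 hY3.1
      exact hub1 A1 B1 Y1 Y2 Y3 hA1 hB1 t1 t2 t3 hB1ne s12 s13 s23 v1 v2 v3
        hDom1 hY1.2 hY2.2 hY3.2
    have hcard2 : (P'.filter (fun X => Dominates G (X ∪ B1))).card ≤ 2 := by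
      by_contra hgt
      push_neg at hgt
      obtain ⟨Y1, hY1, Y2, hY2, Y3, hY3, s12, s13, s23⟩ := Finset.two_lt_card.mp hgt
      rw [Finset.mem_filter] at hY1 hY2 hY3
      obtain ⟨t1, u1, v1⟩ := hmemP' Y1 hY1.1
      obtain ⟨t2, u2, v2⟩ := hmemP' Y2 hY2.1
      obtain ⟨t3, u3, v3⟩ := hmemP' Y3 hY3.1
      exact hub1 B1 A1 Y1 Y2 Y3 hB1 hA1 t1 t2 t3 (fun e => hB1ne e.symm) s12 s13 s23 u1 u2 u3
        (by rwa [Set.union_comm] at hDom1) hY1.2 hY2.2 hY3.2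
    have := Finset.card_le_card hsplit
    have := Finset.card_union_le (P'.filter (fun X => Dominates G (X ∪ A1)))
      (P'.filter (fun X => Dominates G (X ∪ B1)))
    omega

section Builder
variable {m : ℕ} {k : ℕ}

lemma covers_iff {S : Set (Fin (m+3))} : Covers S ↔ ∀ v : Fin (m+3), v ∈ S ∨ v + 1 ∈ S ∨ v - 1 ∈ S :=
  Iff.rfl

lemma build_partition (ℓ : Fin (m + 3) → Fin k)
    (hsur : ∀ i, ∃ v, ℓ v = i)
    (hnd : ∀ i, ¬ (∀ v : Fin (m+3), ℓ v = i ∨ ℓ (v+1) = i ∨ ℓ (v-1) = i))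
    (hpart : ∀ i : Fin k, ∃ j, j ≠ i ∧ ∀ v : Fin (m+3),
      (ℓ v = i ∨ ℓ v = j) ∨ (ℓ (v+1) = i ∨ ℓ (v+1) = j) ∨ (ℓ (v-1) = i ∨ ℓ (v-1) = j)) :
    IsCoalitionPartition (cycleGraph (m+3))
      ((Finset.univ : Finset (Fin k)).image (fun i => {v | ℓ v = i})) ∧
    ((Finset.univ : Finset (Fin k)).image (fun i => {v | ℓ v = i})).card = k := by
  set pt : Fin k → Set (Fin (m+3)) := fun i => {v | ℓ v = i} with hpt
  have hinj : Function.Injective pt := by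
    intro i j hij
    obtain ⟨v, hv⟩ := hsur i
    have : v ∈ pt j := hij ▸ hv
    rw [hpt] at this
    simp only [Set.mem_setOf_eq] at this
    rw [← hv, this]
  have hndom : ∀ i, ¬ Dominates (cycleGraph (m+3)) (pt i) := by
    intro i hd
    apply hnd i
    intro v
    rcases (dominates_iff.mp hd) v with h | h | h <;>
      simp only [hpt, Set.mem_setOf_eq] at h <;> tauto
  have hdomu : ∀ i j : Fin k,
      (∀ v : Fin (m+3), (ℓ v = i ∨ ℓ v = j) ∨ (ℓ (v+1) = i ∨ ℓ (v+1) = j) ∨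
        (ℓ (v-1) = i ∨ ℓ (v-1) = j)) → Dominates (cycleGraph (m+3)) (pt i ∪ pt j) := by
    intro i j h
    rw [dominates_iff]
    intro v
    rcases h v with h' | h' | h' <;>
      simp only [hpt, Set.mem_union, Set.mem_setOf_eq] <;> tauto
  have hdisj : ∀ i j : Fin k, i ≠ j → Disjoint (pt i) (pt j) := by
    intro i j hij
    rw [Set.disjoint_left]
    intro v hv1 hv2
    rw [hpt] at hv1 hv2
    simp only [Set.mem_setOf_eq] at hv1 hv2
    exact hij (hv1 ▸ hv2)
  constructor
  · refine ⟨?_, ?_, ?_, ?_⟩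
    · rintro A hA
      obtain ⟨i, _, rfl⟩ := Finset.mem_image.mp hA
      obtain ⟨v, hv⟩ := hsur i
      exact ⟨v, hv⟩
    · rintro A hA B hB hAB
      obtain ⟨i, _, rfl⟩ := Finset.mem_image.mp hA
      obtain ⟨j, _, rfl⟩ := Finset.mem_image.mp hB
      exact hdisj i j (fun e => hAB (by rw [e]))
    · intro v
      exact ⟨pt (ℓ v), Finset.mem_image.mpr ⟨ℓ v, Finset.mem_univ _, rfl⟩, rfl⟩
    · rintro A hA
      obtain ⟨i, _, rfl⟩ := Finset.mem_image.mp hA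
      right
      refine ⟨hndom i, ?_⟩
      obtain ⟨j, hji, hcov⟩ := hpart i
      exact ⟨pt j, Finset.mem_image.mpr ⟨j, Finset.mem_univ _, rfl⟩,
        fun e => hji (hinj e), hdisj i j (fun e => hji e.symm),
        hndom i, hndom j, hdomu i j hcov⟩
  · rw [Finset.card_image_of_injective _ hinj, Finset.card_univ, Fintype.card_fin]

lemma cn_eq {V : Type*} (G : SimpleGraph V) (k : ℕ)
    (hex : ∃ P, IsCoalitionPartition G P ∧ P.card = k)
    (hub : ∀ P, IsCoalitionPartition G P → P.card ≤ k) :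
    coalitionNumber G = k := by
  apply IsGreatest.csSup_eq
  constructor
  · exact hex
  · rintro x ⟨P, h1, rfl⟩
    exact hub P h1

section Small

lemma lower3 : ∃ P, IsCoalitionPartition (cycleGraph 3) P ∧ P.card = 3 := by
  refine ⟨(Finset.univ : Finset (Fin 3)).image (fun v => ({v} : Set (Fin 3))), ⟨?_, ?_, ?_, ?_⟩, ?_⟩
  · rintro A hA
    obtain ⟨v, _, rfl⟩ := Finset.mem_image.mp hA
    exact ⟨v, rfl⟩
  · rintro A hA B hB hAB
    obtain ⟨v, _, rfl⟩ := Finset.mem_image.mp hA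
    obtain ⟨w, _, rfl⟩ := Finset.mem_image.mp hB
    rw [Set.disjoint_left]
    rintro x rfl h
    exact hAB (by rw [h])
  · intro v
    exact ⟨{v}, Finset.mem_image.mpr ⟨v, Finset.mem_univ _, rfl⟩, rfl⟩
  · rintro A hA
    obtain ⟨v, _, rfl⟩ := Finset.mem_image.mp hA
    left
    refine ⟨?_, v, rfl⟩
    have key : ∀ v u : Fin 3, u = v ∨ u + 1 = v ∨ u - 1 = v := by decide
    have : Covers ({v} : Set (Fin (0 + 3))) := by
      intro u
      simp only [Set.mem_singleton_iff]
      exact key v u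
    exact (dominates_iff (m := 0)).mpr this
  · rw [Finset.card_image_of_injective _ (fun a b h => by
      simpa using Set.singleton_eq_singleton_iff.mp h), Finset.card_univ, Fintype.card_fin]

lemma mini_builder {m k : ℕ} (ℓ : Fin (m + 3) → Fin k)
    (h : (∀ i, ∃ v, ℓ v = i) ∧ (∀ i, ¬ (∀ v : Fin (m+3), ℓ v = i ∨ ℓ (v+1) = i ∨ ℓ (v-1) = i))
      ∧ (∀ i : Fin k, ∃ j, j ≠ i ∧ ∀ v : Fin (m+3),
      (ℓ v = i ∨ ℓ v = j) ∨ (ℓ (v+1) = i ∨ ℓ (v+1) = j) ∨ (ℓ (v-1) = i ∨ ℓ (v-1) = j))) :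
    ∃ P, IsCoalitionPartition (cycleGraph (m+3)) P ∧ P.card = k :=
  ⟨_, build_partition ℓ h.1 h.2.1 h.2.2⟩

lemma lower4 : ∃ P, IsCoalitionPartition (cycleGraph 4) P ∧ P.card = 4 :=
  mini_builder (m := 1) (![0, 1, 2, 3] : Fin 4 → Fin 4) (by refine ⟨?_, ?_, ?_⟩ <;> decide)

lemma lower5 : ∃ P, IsCoalitionPartition (cycleGraph 5) P ∧ P.card = 5 :=
  mini_builder (m := 2) (![0, 1, 2, 3, 4] : Fin 5 → Fin 5) (by refine ⟨?_, ?_, ?_⟩ <;> decide)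

lemma lower6 : ∃ P, IsCoalitionPartition (cycleGraph 6) P ∧ P.card = 6 :=
  mini_builder (m := 3) (![0, 1, 2, 3, 4, 5] : Fin 6 → Fin 6) (by refine ⟨?_, ?_, ?_⟩ <;> decide)

lemma lower7 : ∃ P, IsCoalitionPartition (cycleGraph 7) P ∧ P.card = 5 :=
  mini_builder (m := 4) (![0, 0, 1, 2, 3, 4, 1] : Fin 7 → Fin 5) (by refine ⟨?_, ?_, ?_⟩ <;> decide)

lemma lower8 : ∃ P, IsCoalitionPartition (cycleGraph 8) P ∧ P.card = 6 :=
  mini_builder (m := 5) (![0, 1, 2, 0, 3, 4, 5, 3] : Fin 8 → Fin 6) (by refine ⟨?_, ?_, ?_⟩ <;> decide)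

lemma lower9 : ∃ P, IsCoalitionPartition (cycleGraph 9) P ∧ P.card = 6 :=
  mini_builder (m := 6) (![0, 1, 2, 0, 1, 2, 3, 4, 5] : Fin 9 → Fin 6) (by refine ⟨?_, ?_, ?_⟩ <;> decide)

lemma lower10 : ∃ P, IsCoalitionPartition (cycleGraph 10) P ∧ P.card = 6 :=
  mini_builder (m := 7) (![0, 5, 1, 4, 5, 2, 4, 3, 5, 4] : Fin 10 → Fin 6) (by refine ⟨?_, ?_, ?_⟩ <;> decide)

lemma lower11 : ∃ P, IsCoalitionPartition (cycleGraph 11) P ∧ P.card = 6 :=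
  mini_builder (m := 8) (![0, 0, 1, 0, 2, 3, 0, 1, 4, 5, 1] : Fin 11 → Fin 6) (by refine ⟨?_, ?_, ?_⟩ <;> decide)

end Small

section Seven

lemma exists_big (s : Finset (Set (Fin 7))) (f : Set (Fin 7) → ℕ)
    (h1 : ∀ A ∈ s, 1 ≤ f A) (hsum : ∑ A ∈ s, f A = 7) (hcard : s.card = 6) :
    ∃ T ∈ s, f T = 2 ∧ ∀ A ∈ s, A ≠ T → f A = 1 := by
  have hsum' : ∑ A ∈ s, (f A - 1) = 1 := by
    have : ∑ A ∈ s, f A = ∑ A ∈ s, ((f A - 1) + 1) := by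
      apply Finset.sum_congr rfl
      intro A hA
      have := h1 A hA
      omega
    rw [this, Finset.sum_add_distrib, Finset.sum_const, hcard] at hsum
    simp at hsum
    omega
  have hex : ∃ T ∈ s, f T - 1 ≠ 0 := by
    by_contra h
    push_neg at h
    rw [Finset.sum_eq_zero (fun A hA => h A hA)] at hsum'
    omega
  obtain ⟨T, hT, hT1⟩ := hex
  rw [← Finset.add_sum_erase s _ hT] at hsum'
  have hz : ∑ A ∈ s.erase T, (f A - 1) = 0 := by omega
  refine ⟨T, hT, by omega, ?_⟩
  intro A hA hAT
  have := (Finset.sum_eq_zero_iff).mp hz A (Finset.mem_erase.mpr ⟨hAT, hA⟩)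
  have := h1 A hA
  omega

lemma card_le_five (P : Finset (Set (Fin 7)))
    (hP : IsCoalitionPartition (cycleGraph 7) P) : P.card ≤ 5 := by
  have h6 : P.card ≤ 6 := card_le_six (m := 4) (by omega) P hP
  by_contra h
  have hc6 : P.card = 6 := by omega
  obtain ⟨hne, hdisj, hcov, hcoal⟩ := hP
  obtain ⟨hsum, _⟩ := partition_sum P hne hdisj hcov
  rw [Fintype.card_fin] at hsum
  have h2nd : ∀ S : Set (Fin 7), S.toFinset.card ≤ 2 → ¬ Dominates (cycleGraph 7) S := by
    intro S hS hd
    have := dom_card (m := 4) hd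
    omega
  obtain ⟨T, hT, hT2, hrest⟩ := exists_big P (fun A => A.toFinset.card)
    (fun A hA => by
      obtain ⟨x, hx⟩ := hne A hA
      exact Finset.card_pos.mpr ⟨x, Set.mem_toFinset.mpr hx⟩) hsum hc6
  obtain ⟨x, y, hxy, hTxy⟩ := Finset.card_eq_two.mp hT2
  have hTset : T = {x, y} := by rw [← Set.coe_toFinset T, hTxy]; simp
  have hdom : ∀ a : Fin 7, a ∉ T → Dominates (cycleGraph 7) ({a} ∪ T) := by
    intro a ha
    obtain ⟨A, hA, haA⟩ := hcov a
    have hAT : A ≠ T := fun e => ha (e ▸ haA)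
    have hA1 : A.toFinset.card = 1 := hrest A hA hAT
    obtain ⟨b, hb⟩ := Finset.card_eq_one.mp hA1
    have hAset : A = {b} := by rw [← Set.coe_toFinset A, hb]; simp
    have hab : a = b := by rwa [hAset, Set.mem_singleton_iff] at haA
    subst hab
    rcases hcoal A hA with ⟨hd, _⟩ | ⟨_, B, hB, hBA, hco⟩
    · exact absurd hd (h2nd A (by omega))
    · have hBdom := hco.2.2.2
      by_cases hBT : B = T
      · rwa [hAset, hBT] at hBdom
      · exfalso
        have hB1 : B.toFinset.card = 1 := hrest B hB hBT
        apply h2nd (A ∪ B) ?_ hBdom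
        rw [Set.toFinset_union]
        have := Finset.card_union_le A.toFinset B.toFinset
        omega
  have key : ∀ x y : Fin 7, x ≠ y → ∃ a : Fin 7, a ≠ x ∧ a ≠ y ∧
      ¬ (∀ v : Fin 7, (v = a ∨ v = x ∨ v = y) ∨ (v + 1 = a ∨ v + 1 = x ∨ v + 1 = y) ∨
        (v - 1 = a ∨ v - 1 = x ∨ v - 1 = y)) := by decide
  obtain ⟨a, hax, hay, hnc⟩ := key x y hxy
  apply hnc
  have hcv := (dominates_iff (m := 4)).mp (hdom a (by rw [hTset]; simp [hax, hay]))
  intro v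
  rcases hcv v with h | h | h <;> rw [hTset] at h <;>
    simp only [Set.mem_union, Set.mem_insert_iff, Set.mem_singleton_iff] at h <;> tauto

end Seven

section General
variable {m : ℕ}

lemma val_add_one (v : Fin (m + 3)) :
    (v + 1).val = if v.val + 1 = m + 3 then 0 else v.val + 1 := by
  have h1 : (1 : Fin (m + 3)).val = 1 := rfl
  rw [Fin.add_def, h1]
  show (v.val + 1) % (m + 3) = _
  split_ifs with h
  · rw [h, Nat.mod_self]
  · exact Nat.mod_eq_of_lt (by have := v.isLt; omega)

lemma val_sub_one (v : Fin (m + 3)) :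
    (v - 1).val = if v.val = 0 then m + 2 else v.val - 1 := by
  have h1 : (1 : Fin (m + 3)).val = 1 := rfl
  rw [Fin.sub_def, h1]
  show (m + 3 - 1 + v.val) % (m + 3) = _
  split_ifs with h
  · rw [h]
    exact Nat.mod_eq_of_lt (by omega)
  · have hv := v.isLt
    have h2 : m + 3 - 1 + v.val = (v.val - 1) + (m + 3) := by omega
    rw [h2, Nat.add_mod_right]
    exact Nat.mod_eq_of_lt (by omega)

noncomputable def lab (m : ℕ) (v : Fin (m + 3)) : Fin 6 :=
  if v.val = 0 then 0
  else if v.val = 2 then 1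
  else if v.val = m - 2 then 2
  else if v.val = m then 3
  else if v.val = 3 ∨ v.val = m - 1 ∨ v.val = m + 2 ∨
    (5 ≤ v.val ∧ v.val ≤ m - 3 ∧ v.val % 2 = (m - 4) % 2) then 4
  else 5

lemma lab_iff (hm : 9 ≤ m) (v : Fin (m + 3)) :
    (lab m v = 0 ↔ v.val = 0) ∧ (lab m v = 1 ↔ v.val = 2) ∧
    (lab m v = 2 ↔ v.val = m - 2) ∧ (lab m v = 3 ↔ v.val = m) ∧
    (lab m v = 4 ↔ (v.val = 3 ∨ v.val = m - 1 ∨ v.val = m + 2 ∨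
      (5 ≤ v.val ∧ v.val ≤ m - 3 ∧ v.val % 2 = (m - 4) % 2))) ∧
    (lab m v = 5 ↔ (v.val = 1 ∨ v.val = 4 ∨ v.val = m + 1 ∨
      (5 ≤ v.val ∧ v.val ≤ m - 3 ∧ v.val % 2 ≠ (m - 4) % 2))) := by
  have ha := v.isLt
  unfold lab
  split_ifs with h1 h2 h3 h4 h5 <;>
    refine ⟨?_, ?_, ?_, ?_, ?_, ?_⟩ <;> simp [Fin.ext_iff, -Fin.val_eq_zero_iff] <;> omega

set_option maxHeartbeats 8000000 in
lemma lower_general (hm : 9 ≤ m) :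
    ∃ P, IsCoalitionPartition (cycleGraph (m + 3)) P ∧ P.card = 6 := by
  apply mini_builder (lab m)
  have hiff := lab_iff hm
  refine ⟨?_, ?_, ?_⟩
  · intro i
    fin_cases i <;> simp only [Fin.reduceFinMk]
    · exact ⟨⟨0, by omega⟩, ((hiff _).1).mpr rfl⟩
    · exact ⟨⟨2, by omega⟩, ((hiff _).2.1).mpr rfl⟩
    · exact ⟨⟨m - 2, by omega⟩, ((hiff _).2.2.1).mpr rfl⟩
    · exact ⟨⟨m, by omega⟩, ((hiff _).2.2.2.1).mpr rfl⟩
    · exact ⟨⟨3, by omega⟩, ((hiff _).2.2.2.2.1).mpr (Or.inl rfl)⟩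
    · exact ⟨⟨1, by omega⟩, ((hiff _).2.2.2.2.2).mpr (Or.inl rfl)⟩
  · intro i
    fin_cases i <;> simp only [Fin.reduceFinMk] <;> intro h
    · set w : Fin (m+3) := ⟨3, by omega⟩ with hwdef
      have hwv : w.val = 3 := rfl
      have hh := h w
      rw [(hiff w).1, (hiff (w+1)).1, (hiff (w-1)).1] at hh
      have e1 := val_add_one w
      have e2 := val_sub_one w
      rw [hwv] at e1 e2
      rw [if_neg (show ¬(3 + 1 = m + 3) by omega)] at e1
      rw [if_neg (show ¬((3:ℕ) = 0) by omega)] at e2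
      omega
    · set w : Fin (m+3) := ⟨5, by omega⟩ with hwdef
      have hwv : w.val = 5 := rfl
      have hh := h w
      rw [(hiff w).2.1, (hiff (w+1)).2.1, (hiff (w-1)).2.1] at hh
      have e1 := val_add_one w
      have e2 := val_sub_one w
      rw [hwv] at e1 e2
      rw [if_neg (show ¬(5 + 1 = m + 3) by omega)] at e1
      rw [if_neg (show ¬((5:ℕ) = 0) by omega)] at e2
      omega
    · set w : Fin (m+3) := ⟨3, by omega⟩ with hwdef
      have hwv : w.val = 3 := rfl
      have hh := h w
      rw [(hiff w).2.2.1, (hiff (w+1)).2.2.1, (hiff (w-1)).2.2.1] at hh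
      have e1 := val_add_one w
      have e2 := val_sub_one w
      rw [hwv] at e1 e2
      rw [if_neg (show ¬(3 + 1 = m + 3) by omega)] at e1
      rw [if_neg (show ¬((3:ℕ) = 0) by omega)] at e2
      omega
    · set w : Fin (m+3) := ⟨3, by omega⟩ with hwdef
      have hwv : w.val = 3 := rfl
      have hh := h w
      rw [(hiff w).2.2.2.1, (hiff (w+1)).2.2.2.1, (hiff (w-1)).2.2.2.1] at hh
      have e1 := val_add_one w
      have e2 := val_sub_one w
      rw [hwv] at e1 e2
      rw [if_neg (show ¬(3 + 1 = m + 3) by omega)] at e1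
      rw [if_neg (show ¬((3:ℕ) = 0) by omega)] at e2
      omega
    · set w : Fin (m+3) := ⟨1, by omega⟩ with hwdef
      have hwv : w.val = 1 := rfl
      have hh := h w
      rw [(hiff w).2.2.2.2.1, (hiff (w+1)).2.2.2.2.1, (hiff (w-1)).2.2.2.2.1] at hh
      have e1 := val_add_one w
      have e2 := val_sub_one w
      rw [hwv] at e1 e2
      rw [if_neg (show ¬(1 + 1 = m + 3) by omega)] at e1
      rw [if_neg (show ¬((1:ℕ) = 0) by omega)] at e2
      omega
    · set w : Fin (m+3) := ⟨m - 1, by omega⟩ with hwdef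
      have hwv : w.val = m - 1 := rfl
      have hh := h w
      rw [(hiff w).2.2.2.2.2, (hiff (w+1)).2.2.2.2.2, (hiff (w-1)).2.2.2.2.2] at hh
      have e1 := val_add_one w
      have e2 := val_sub_one w
      rw [hwv] at e1 e2
      rw [if_neg (show ¬(m - 1 + 1 = m + 3) by omega)] at e1
      rw [if_neg (show ¬((m - 1:ℕ) = 0) by omega)] at e2
      omega
  · intro i
    fin_cases i <;> simp only [Fin.reduceFinMk]
    · refine ⟨4, by decide, ?_⟩
      intro v
      rw [(hiff v).1, (hiff (v+1)).1, (hiff (v-1)).1,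
          (hiff v).2.2.2.2.1, (hiff (v+1)).2.2.2.2.1, (hiff (v-1)).2.2.2.2.1]
      have ha := v.isLt
      have e1 := val_add_one v
      have e2 := val_sub_one v
      split_ifs at e1 e2 <;> omega
    · refine ⟨4, by decide, ?_⟩
      intro v
      rw [(hiff v).2.1, (hiff (v+1)).2.1, (hiff (v-1)).2.1,
          (hiff v).2.2.2.2.1, (hiff (v+1)).2.2.2.2.1, (hiff (v-1)).2.2.2.2.1]
      have ha := v.isLt
      have e1 := val_add_one v
      have e2 := val_sub_one v
      split_ifs at e1 e2 <;> omega
    · refine ⟨5, by decide, ?_⟩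
      intro v
      rw [(hiff v).2.2.1, (hiff (v+1)).2.2.1, (hiff (v-1)).2.2.1,
          (hiff v).2.2.2.2.2, (hiff (v+1)).2.2.2.2.2, (hiff (v-1)).2.2.2.2.2]
      have ha := v.isLt
      have e1 := val_add_one v
      have e2 := val_sub_one v
      split_ifs at e1 e2 <;> omega
    · refine ⟨5, by decide, ?_⟩
      intro v
      rw [(hiff v).2.2.2.1, (hiff (v+1)).2.2.2.1, (hiff (v-1)).2.2.2.1,
          (hiff v).2.2.2.2.2, (hiff (v+1)).2.2.2.2.2, (hiff (v-1)).2.2.2.2.2]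
      have ha := v.isLt
      have e1 := val_add_one v
      have e2 := val_sub_one v
      split_ifs at e1 e2 <;> omega
    · refine ⟨0, by decide, ?_⟩
      intro v
      rw [(hiff v).2.2.2.2.1, (hiff (v+1)).2.2.2.2.1, (hiff (v-1)).2.2.2.2.1,
          (hiff v).1, (hiff (v+1)).1, (hiff (v-1)).1]
      have ha := v.isLt
      have e1 := val_add_one v
      have e2 := val_sub_one v
      split_ifs at e1 e2 <;> omega
    · refine ⟨2, by decide, ?_⟩
      intro v
      rw [(hiff v).2.2.2.2.2, (hiff (v+1)).2.2.2.2.2, (hiff (v-1)).2.2.2.2.2,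
          (hiff v).2.2.1, (hiff (v+1)).2.2.1, (hiff (v-1)).2.2.1]
      have ha := v.isLt
      have e1 := val_add_one v
      have e2 := val_sub_one v
      split_ifs at e1 e2 <;> omega

end General


theorem stmt4 :
    (∀ n : ℕ, 3 ≤ n → n ≤ 6 → coalitionNumber (SimpleGraph.cycleGraph n) = n) ∧
    coalitionNumber (SimpleGraph.cycleGraph 7) = 5 ∧
    (∀ n : ℕ, 8 ≤ n → coalitionNumber (SimpleGraph.cycleGraph n) = 6) := by
  refine ⟨?_, ?_, ?_⟩
  · intro n h3 h6
    have upper : ∀ k : ℕ, ∀ P : Finset (Set (Fin k)),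
        IsCoalitionPartition (cycleGraph k) P → P.card ≤ k := by
      intro k P hP
      have := (partition_sum P hP.1 hP.2.1 hP.2.2.1).2
      simpa using this
    interval_cases n
    · exact cn_eq _ 3 lower3 (upper 3)
    · exact cn_eq _ 4 lower4 (upper 4)
    · exact cn_eq _ 5 lower5 (upper 5)
    · exact cn_eq _ 6 lower6 (upper 6)
  · exact cn_eq _ 5 lower7 card_le_five
  · intro n h8
    obtain ⟨m, rfl⟩ : ∃ m, n = m + 3 := ⟨n - 3, by omega⟩
    apply cn_eq _ 6 ?_ (fun P hP => card_le_six (by omega) P hP)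
    rcases Nat.lt_or_ge m 9 with hlt | hge
    · have hm5 : 5 ≤ m := by omega
      interval_cases m
      · exact lower8
      · exact lower9
      · exact lower10
      · exact lower11
    · exact lower_general hge
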